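/- For every integer n ≥ 1, let d_n be the real number defined by |Σ_{k=n}^∞ (−1)^k s_k| = (s_n/(1+ε)) · exp(a₁/n + (a₂ − a₁²/2)/n² + d_n·ε/n³). Then 0.321 < d_n < 0.671. -/

import Mathlib

open Real Filter

/-- `S = 13591409/545140134` from the Chudnovsky series. -/
noncomputable def S : ℝ := 13591409 / 545140134

/-- `ε = 1728/640320³ = 53360⁻³`. -/
noncomputable def eps : ℝ := 1728 / 640320 ^ 3

/-- The terms `s_k = (6k)!/((3k)!·(k!)³) · (k+S)/640320^{3k}` of the Chudnovsky series. -/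
noncomputable def s (k : ℕ) : ℝ :=
  (Nat.factorial (6 * k) : ℝ) / ((Nat.factorial (3 * k) : ℝ) * (Nat.factorial k : ℝ) ^ 3)
    * ((k : ℝ) + S) / 640320 ^ (3 * k)

/-- `a₁ = ε/(2(1+ε))`. -/
noncomputable def a1 : ℝ := eps / (2 * (1 + eps))

/-- `a₂ = S·ε/(1+ε) − (23ε − 4ε²)/(36(1+ε)²)`. -/
noncomputable def a2 : ℝ :=
  S * eps / (1 + eps) - (23 * eps - 4 * eps ^ 2) / (36 * (1 + eps) ^ 2)

/-!
Let `T n = ∑_{k ≥ n} (-1)^k s_k` and `s_{n+1} = r(n) s_n`, with the rational function `r = ratio`.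
From `T n = (-1)^n s_n + T (n+1)`, the quotient `q(n) = (-1)^n T n / s_n` satisfies
`q(n) + r(n) q(n+1) = 1` exactly, while `M(x) = (1 + a₁/x + a₂/x² + 0.496 ε/x³)/(1+ε)` satisfies it
up to a defect of at most `0.1747 ε/x³`. Since `r ≤ 3ε`, the error `q - M` is hardly amplified along
the recursion, so `(1+ε)|T n| / s_n` lies within `0.17471 (1+ε) ε/n³` of
`1 + a₁/n + a₂/n² + 0.496 ε/n³`. As `a₁/n + (a₂ - a₁²/2)/n²` is the second-order expansion of
`log (1 + a₁/n + a₂/n²)`, the quadratic and cubic Taylor bounds for `exp` then confine `d` to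
`0.496 ± 0.175`.
-/

open Topology

lemma abs_le_of_abs_le_add_abs_succ {e δ b : ℕ → ℝ} {N : ℕ} (he : Tendsto e atTop (𝓝 0))
    (hb : ∀ n ≥ N, 0 ≤ b n) (hstep : ∀ n ≥ N, |e n| ≤ δ n + |e (n + 1)|)
    (hδ : ∀ n ≥ N, δ n + b (n + 1) ≤ b n) {n : ℕ} (hn : N ≤ n) : |e n| ≤ b n := by
  have hmono : ∀ m ≥ n, |e n| - b n ≤ |e m| - b m := by
    refine Nat.le_induction le_rfl fun m hm ih ↦ ?_
    linarith [hstep m (hn.trans hm), hδ m (hn.trans hm)]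
  have habs : Tendsto (fun m ↦ |e m|) atTop (𝓝 0) := by simpa using he.abs
  have := ge_of_tendsto habs <| eventually_atTop.2
    ⟨n, fun m hm ↦ (hmono m hm).trans (sub_le_self _ (hb m (hn.trans hm)))⟩
  linarith

namespace Chudnovsky

lemma S_pos : 0 < S := by norm_num [S]

lemma eps_pos : 0 < eps := by norm_num [eps]

lemma s_pos (n : ℕ) : 0 < s n := by
  have := S_pos
  unfold s
  positivity

noncomputable def ratio (x : ℝ) : ℝ :=
  eps * (6 * x + 1) * (6 * x + 5) * (2 * x + 1) * (x + 1 + S) / (72 * (x + 1) ^ 3 * (x + S))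

lemma s_succ (n : ℕ) : s (n + 1) = ratio n * s n := by
  have h6 : ((6 * (n + 1)).factorial : ℝ) =
      (6 * n + 1) * (6 * n + 2) * (6 * n + 3) * (6 * n + 4) * (6 * n + 5) * (6 * n + 6) *
        (6 * n).factorial := by
    rw [show 6 * (n + 1) = 6 * n + 1 + 1 + 1 + 1 + 1 + 1 by ring]
    simp only [Nat.factorial_succ]
    push_cast
    ring
  have h3 : ((3 * (n + 1)).factorial : ℝ) =
      (3 * n + 1) * (3 * n + 2) * (3 * n + 3) * (3 * n).factorial := by
    rw [show 3 * (n + 1) = 3 * n + 1 + 1 + 1 by ring]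
    simp only [Nat.factorial_succ]
    push_cast
    ring
  have h1 : ((n + 1).factorial : ℝ) = (n + 1) * n.factorial := by
    push_cast [Nat.factorial_succ]
    ring
  have := S_pos
  unfold s ratio eps
  rw [h6, h3, h1, show 3 * (n + 1) = 3 * n + 3 by ring, pow_add]
  push_cast
  field_simp
  ring

lemma ratio_le_half {x : ℝ} (hx : 0 ≤ x) : ratio x ≤ 1 / 2 := by
  have := S_pos
  rw [ratio, div_le_iff₀ (by positivity)]
  norm_num [eps, S]
  rw [← sub_nonneg]
  ring_nf
  positivity

lemma ratio_le_three_mul_eps {x : ℝ} (hx : 0 ≤ x) : ratio x ≤ 3 * eps := by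
  have := S_pos
  rw [ratio, div_le_iff₀ (by positivity)]
  norm_num [eps, S]
  rw [← sub_nonneg]
  ring_nf
  positivity

lemma summable_s : Summable s := by
  refine summable_of_ratio_norm_eventually_le (r := 1 / 2) (by norm_num) (Eventually.of_forall ?_)
  intro n
  rw [Real.norm_of_nonneg (s_pos _).le, Real.norm_of_nonneg (s_pos _).le, s_succ]
  exact mul_le_mul_of_nonneg_right (ratio_le_half n.cast_nonneg) (s_pos n).le

noncomputable def tail (n : ℕ) : ℝ := ∑' k : ℕ, (-1 : ℝ) ^ (n + k) * s (n + k)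

lemma summable_alternating : Summable fun k ↦ (-1 : ℝ) ^ k * s k :=
  .of_norm <| by simpa [abs_of_pos (s_pos _)] using summable_s

lemma tail_eq_add_tail_succ (n : ℕ) : tail n = (-1) ^ n * s n + tail (n + 1) := by
  have h := (summable_nat_add_iff n).2 summable_alternating
  simp only [tail]
  rw [Summable.tsum_eq_zero_add (by simpa only [add_comm] using h)]
  simp only [add_zero, add_assoc, add_comm 1]

lemma tendsto_tail : Tendsto tail atTop (𝓝 0) := by
  have h := tendsto_sum_nat_add fun j ↦ (-1 : ℝ) ^ j * s j
  simp only [add_comm] at h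
  exact h

noncomputable def tailApprox (x : ℝ) : ℝ :=
  (x ^ 3 + a1 * x ^ 2 + a2 * x + 0.496 * eps) / ((1 + eps) * x ^ 3)

lemma tailApprox_nonneg {x : ℝ} (hx : 1 ≤ x) : 0 ≤ tailApprox x := by
  -- With `x = 1 + y`, this and the polynomial inequalities below have only positive coefficients.
  obtain ⟨y, hy, rfl⟩ : ∃ y, 0 ≤ y ∧ x = 1 + y := ⟨x - 1, by linarith, by ring⟩
  have := eps_pos
  refine div_nonneg ?_ (by positivity)
  norm_num [a1, a2, eps, S]
  ring_nf
  positivity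

lemma tailApprox_le_one {x : ℝ} (hx : 1 ≤ x) : tailApprox x ≤ 1 := by
  obtain ⟨y, hy, rfl⟩ : ∃ y, 0 ≤ y ∧ x = 1 + y := ⟨x - 1, by linarith, by ring⟩
  have := eps_pos
  rw [tailApprox, div_le_one (by positivity)]
  norm_num [a1, a2, eps, S]
  rw [← sub_nonneg]
  ring_nf
  positivity

noncomputable def defect (x : ℝ) : ℝ := 1 - ratio x * tailApprox (x + 1) - tailApprox x

lemma abs_defect_le {x : ℝ} (hx : 1 ≤ x) : |defect x| ≤ 0.1747 * eps / x ^ 3 := by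
  obtain ⟨y, hy, rfl⟩ : ∃ y, 0 ≤ y ∧ x = 1 + y := ⟨x - 1, by linarith, by ring⟩
  have := S_pos
  unfold defect ratio tailApprox
  rw [abs_le]
  constructor
  · rw [← sub_nonneg]
    field_simp
    norm_num [a1, a2, eps, S]
    ring_nf
    positivity
  · field_simp
    norm_num [a1, a2, eps, S]
    rw [← sub_nonneg]
    ring_nf
    positivity

noncomputable def tailError (n : ℕ) : ℝ := tail n - (-1) ^ n * (tailApprox n * s n)

lemma tailError_sub_tailError_succ (n : ℕ) :
    tailError n - tailError (n + 1) = (-1) ^ n * (s n * defect n) := by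
  rw [tailError, tailError, tail_eq_add_tail_succ n, s_succ, defect]
  push_cast
  ring

lemma tendsto_tailError : Tendsto tailError atTop (𝓝 0) := by
  have hsigned : Tendsto (fun m : ℕ ↦ (-1 : ℝ) ^ m * (tailApprox m * s m)) atTop (𝓝 0) := by
    refine squeeze_zero_norm' (eventually_atTop.2 ⟨1, fun m hm ↦ ?_⟩)
      summable_s.tendsto_atTop_zero
    have hx : (1 : ℝ) ≤ m := by exact_mod_cast hm
    rw [Real.norm_eq_abs, abs_mul, abs_neg_one_pow, one_mul,
      abs_of_nonneg (mul_nonneg (tailApprox_nonneg hx) (s_pos m).le)]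
    exact mul_le_of_le_one_left (s_pos m).le (tailApprox_le_one hx)
  have h := tendsto_tail.sub hsigned
  rw [sub_zero] at h
  exact h

lemma abs_tailError_le {n : ℕ} (hn : 1 ≤ n) :
    |tailError n| ≤ 0.17471 * eps / (n : ℝ) ^ 3 * s n := by
  have heps := eps_pos
  refine abs_le_of_abs_le_add_abs_succ tendsto_tailError
    (b := fun m ↦ 0.17471 * eps / (m : ℝ) ^ 3 * s m)
    (δ := fun m ↦ s m * (0.1747 * eps / (m : ℝ) ^ 3))
    (fun m _ ↦ by have := s_pos m; positivity) (fun m hm ↦ ?_) (fun m hm ↦ ?_) hn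
  · have hx : (1 : ℝ) ≤ m := by exact_mod_cast hm
    have htri := abs_sub_abs_le_abs_sub (tailError m) (tailError (m + 1))
    rw [tailError_sub_tailError_succ, abs_mul, abs_neg_one_pow, one_mul, abs_mul,
      abs_of_pos (s_pos m)] at htri
    have hdefect := mul_le_mul_of_nonneg_left (abs_defect_le hx) (s_pos m).le
    linarith
  · have hs_succ : s (m + 1) ≤ 3 * eps * s m := by
      rw [s_succ]
      exact mul_le_mul_of_nonneg_right (ratio_le_three_mul_eps m.cast_nonneg) (s_pos m).le
    have hq : 0 ≤ eps / (m : ℝ) ^ 3 * s m := by have := s_pos m; positivity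
    calc s m * (0.1747 * eps / (m : ℝ) ^ 3)
          + 0.17471 * eps / ((m + 1 : ℕ) : ℝ) ^ 3 * s (m + 1)
        ≤ s m * (0.1747 * eps / (m : ℝ) ^ 3)
          + 0.17471 * eps / (m : ℝ) ^ 3 * (3 * eps * s m) := by
          gcongr
          · exact (s_pos _).le
          · omega
      _ = (0.1747 + 3 * eps * 0.17471) * (eps / (m : ℝ) ^ 3 * s m) := by ring
      _ ≤ 0.17471 * (eps / (m : ℝ) ^ 3 * s m) := by
          gcongr
          norm_num [eps]
      _ = 0.17471 * eps / (m : ℝ) ^ 3 * s m := by ring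

noncomputable def exponent (x c : ℝ) : ℝ := a1 / x + (a2 - a1 ^ 2 / 2) / x ^ 2 + c * eps / x ^ 3

noncomputable def expansion (x c : ℝ) : ℝ := 1 + a1 / x + a2 / x ^ 2 + c * eps / x ^ 3

lemma strictMono_exponent {x : ℝ} (hx : 0 < x) : StrictMono (exponent x) := by
  have := eps_pos
  intro c c' h
  unfold exponent
  gcongr

lemma exponent_nonneg {x : ℝ} (hx : 1 ≤ x) : 0 ≤ exponent x 0.321 := by
  obtain ⟨y, hy, rfl⟩ : ∃ y, 0 ≤ y ∧ x = 1 + y := ⟨x - 1, by linarith, by ring⟩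
  unfold exponent
  field_simp
  norm_num [a1, a2, eps, S]
  rw [← sub_nonneg]
  ring_nf
  positivity

lemma exponent_le_one {x : ℝ} (hx : 1 ≤ x) : exponent x 0.321 ≤ 1 := by
  obtain ⟨y, hy, rfl⟩ : ∃ y, 0 ≤ y ∧ x = 1 + y := ⟨x - 1, by linarith, by ring⟩
  unfold exponent
  field_simp
  norm_num [a1, a2, eps, S]
  rw [← sub_nonneg]
  ring_nf
  positivity

lemma expansion_lt_exp_exponent {x : ℝ} (hx : 1 ≤ x) : expansion x 0.6708 < exp (exponent x 0.671) := by
  have hX : 0 ≤ exponent x 0.671 :=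
    (exponent_nonneg hx).trans ((strictMono_exponent (by linarith)).monotone (by norm_num))
  refine lt_of_lt_of_le ?_ (quadratic_le_exp_of_nonneg hX)
  obtain ⟨y, hy, rfl⟩ : ∃ y, 0 ≤ y ∧ x = 1 + y := ⟨x - 1, by linarith, by ring⟩
  unfold expansion exponent
  field_simp
  norm_num [a1, a2, eps, S]
  rw [← sub_pos]
  ring_nf
  positivity

lemma exp_exponent_lt_expansion {x : ℝ} (hx : 1 ≤ x) : exp (exponent x 0.321) < expansion x 0.3212 := by
  refine (Real.exp_bound' (exponent_nonneg hx) (exponent_le_one hx) (n := 3) (by norm_num)).trans_lt ?_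
  obtain ⟨y, hy, rfl⟩ : ∃ y, 0 ≤ y ∧ x = 1 + y := ⟨x - 1, by linarith, by ring⟩
  simp only [Finset.sum_range_succ, Finset.sum_range_zero, Nat.factorial]
  unfold expansion exponent
  field_simp
  norm_num [a1, a2, eps, S]
  rw [← sub_pos]
  ring_nf
  positivity

lemma one_add_eps_mul_abs_tail_mem_Icc {n : ℕ} (hn : 1 ≤ n) :
    (1 + eps) * |tail n| ∈ Set.Icc (expansion n 0.3212 * s n) (expansion n 0.6708 * s n) := by
  have hx : (1 : ℝ) ≤ n := by exact_mod_cast hn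
  have heps := eps_pos
  have hs := s_pos n
  have hband : |(|tail n| - tailApprox n * s n)| ≤ 0.17471 * eps / (n : ℝ) ^ 3 * s n := by
    have h := abs_abs_sub_abs_le_abs_sub (tail n) ((-1) ^ n * (tailApprox n * s n))
    rw [abs_mul, abs_neg_one_pow, one_mul,
      abs_of_nonneg (mul_nonneg (tailApprox_nonneg hx) hs.le)] at h
    exact h.trans (abs_tailError_le hn)
  have hshift (c : ℝ) : (1 + eps) * (tailApprox n * s n + c * eps / (n : ℝ) ^ 3 * s n) =
      expansion n (0.496 + (1 + eps) * c) * s n := by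
    unfold tailApprox expansion
    field_simp
    ring
  obtain ⟨hlo, hhi⟩ := abs_le.1 hband
  constructor
  · calc expansion n 0.3212 * s n ≤ expansion n (0.496 + (1 + eps) * (-0.17471)) * s n := by
          unfold expansion
          gcongr
          norm_num [eps]
      _ = (1 + eps) * (tailApprox n * s n - 0.17471 * eps / (n : ℝ) ^ 3 * s n) := by
          rw [← hshift]
          ring
      _ ≤ (1 + eps) * |tail n| := by
          gcongr
          linarith
  · calc (1 + eps) * |tail n|
          ≤ (1 + eps) * (tailApprox n * s n + 0.17471 * eps / (n : ℝ) ^ 3 * s n) := by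
          gcongr
          linarith
      _ = expansion n (0.496 + (1 + eps) * 0.17471) * s n := hshift _
      _ ≤ expansion n 0.6708 * s n := by
          unfold expansion
          gcongr
          norm_num [eps]

end Chudnovsky

open Chudnovsky

theorem truncation_error_exp_expansion (n : ℕ) (hn : 1 ≤ n) (d : ℝ)
    (hd : |∑' k : ℕ, (-1 : ℝ) ^ (n + k) * s (n + k)| =
      s n / (1 + eps) *
        Real.exp (a1 / (n : ℝ) + (a2 - a1 ^ 2 / 2) / (n : ℝ) ^ 2 + d * eps / (n : ℝ) ^ 3)) :
    0.321 < d ∧ d < 0.671 := by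
  have hx : (1 : ℝ) ≤ n := by exact_mod_cast hn
  have hmono : StrictMono fun c ↦ exp (exponent n c) :=
    exp_strictMono.comp (strictMono_exponent (by linarith))
  have hexp : (1 + eps) * |tail n| = exp (exponent n d) * s n := by
    have := eps_pos
    rw [tail, hd, exponent]
    field_simp
  obtain ⟨hlo, hhi⟩ := one_add_eps_mul_abs_tail_mem_Icc hn
  rw [hexp] at hlo hhi
  constructor
  · refine hmono.lt_iff_lt.1 ((exp_exponent_lt_expansion hx).trans_le ?_)
    exact le_of_mul_le_mul_right hlo (s_pos n)
  · refine hmono.lt_iff_lt.1 (lt_of_le_of_lt ?_ (expansion_lt_exp_exponent hx))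
    exact le_of_mul_le_mul_right hhi (s_pos n)
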